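/- Let (Ω, 𝓕, μ) be a probability space and γ > 0 a fixed constant. For each n ≥ 1, let P_n, P'_n, Q_n, Q'_n, R_n, R'_n, S_n, S'_n : Ω → M_n(ℝ) be measurable random n × n real matrices such that: (i) for μ-almost every ω, S_n(ω) and S'_n(ω) are symmetric positive semidefinite; (ii) there is a constant C with ‖Q'_n(ω)‖ ≤ C, ‖R_n(ω)‖ ≤ C, and ‖R'_n(ω)‖ ≤ C for μ-almost every ω and all n; (iii) each of ‖P_n − P'_n‖, ‖Q_n − Q'_n‖, ‖R_n − R'_n‖, ‖S_n − S'_n‖ converges to 0 in probability. Define the statistics T_n(ω) = (1/n)Tr(P_n(ω) − Q_n(ω)(S_n(ω) + γI)⁻¹R_n(ω)) and T'_n(ω) = (1/n)Tr(P'_n(ω) − Q'_n(ω)(S'_n(ω) + γI)⁻¹R'_n(ω)). Then T_n − T'_n → 0 in probability: for every ε > 0, μ{ω : |T_n(ω) − T'_n(ω)| > ε} → 0 as n → ∞. -/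

import Mathlib

open MeasureTheory Filter

/-- The `ℓ²→ℓ²` operator norm of a real `n × n` matrix. -/
noncomputable def opNorm {n : ℕ} (M : Matrix (Fin n) (Fin n) ℝ) : ℝ :=
  ‖LinearMap.toContinuousLinearMap (Matrix.toEuclideanLin M)‖

/-- Measurable structure on real matrices: the product (entrywise Borel) σ-algebra. -/
instance matrixMeasurableSpace {n : ℕ} : MeasurableSpace (Matrix (Fin n) (Fin n) ℝ) :=
  (inferInstance : MeasurableSpace (Fin n → Fin n → ℝ))

/-- The KCIT-type statistic `(1/n)Tr(P − Q(S + γI)⁻¹R)`. -/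
noncomputable def kcitStat {n : ℕ} (γ : ℝ) (P Q S R : Matrix (Fin n) (Fin n) ℝ) : ℝ :=
  (1 / (n : ℝ)) * (P - Q * (S + γ • (1 : Matrix (Fin n) (Fin n) ℝ))⁻¹ * R).trace

/-!
The difference of the two statistics is controlled deterministically: the normalised trace is
dominated by the operator norm, the resolvents `(S + γI)⁻¹` have norm at most `γ⁻¹` because `S`
is positive semidefinite, and the resolvent identity
`(S + γI)⁻¹ - (S' + γI)⁻¹ = (S + γI)⁻¹ (S' - S) (S' + γI)⁻¹` turns the difference into a sum of
terms each containing one of the differences `P - P'`, `Q - Q'`, `R - R'`, `S - S'`. Hence, off a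
null set, `|T_n - T'_n|` is bounded by a fixed linear combination of the four operator-norm
differences, and convergence in measure to `0` is stable under linear combinations and domination.
-/

open scoped ComplexOrder InnerProductSpace Matrix.Norms.L2Operator

theorem ContinuousLinearMap.IsPositive.mul_norm_le_norm_add_smul {𝕜 E : Type*} [RCLike 𝕜]
    [NormedAddCommGroup E] [InnerProductSpace 𝕜 E] {T : E →L[𝕜] E} (hT : T.IsPositive)
    (γ : ℝ) (x : E) : γ * ‖x‖ ≤ ‖T x + (γ : 𝕜) • x‖ := by
  have hinner : γ * ‖x‖ ^ 2 ≤ ‖x‖ * ‖T x + (γ : 𝕜) • x‖ :=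
    calc γ * ‖x‖ ^ 2 ≤ RCLike.re ⟪x, T x⟫_𝕜 + γ * ‖x‖ ^ 2 :=
          le_add_of_nonneg_left (hT.re_inner_nonneg_right x)
      _ = RCLike.re ⟪x, T x + (γ : 𝕜) • x⟫_𝕜 := by
        simp [inner_add_right, inner_smul_right, inner_self_eq_norm_sq_to_K]
      _ ≤ ‖x‖ * ‖T x + (γ : 𝕜) • x‖ := re_inner_le_norm _ _
  rcases (norm_nonneg x).eq_or_lt with hx | hx
  · simp [← hx]
  · nlinarith

theorem norm_sub_mul_mul_sub_sub_mul_mul_le {R : Type*} [NormedRing R]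
    {p p' q q' a a' b b' r r' : R} (hab : a * b = 1) (hba' : b' * a' = 1) :
    ‖(p - q * a * r) - (p' - q' * a' * r')‖ ≤
      ‖p - p'‖ + ‖q - q'‖ * ‖a‖ * ‖r‖ + ‖q'‖ * ‖a‖ * ‖b - b'‖ * ‖a'‖ * ‖r‖
        + ‖q'‖ * ‖a'‖ * ‖r - r'‖ := by
  have resolvent : a - a' = a * (b' - b) * a' :=
    calc a - a' = a * (b' * a') - (a * b) * a' := by rw [hba', hab, mul_one, one_mul]
      _ = a * (b' - b) * a' := by noncomm_ring
  have decomp : (p - q * a * r) - (p' - q' * a' * r') =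
      (p - p') - (q - q') * a * r - q' * (a - a') * r - q' * a' * (r - r') := by
    noncomm_ring
  rw [decomp, resolvent]
  calc _ ≤ ‖p - p'‖ + ‖(q - q') * a * r‖ + ‖q' * (a * (b' - b) * a') * r‖
          + ‖q' * a' * (r - r')‖ := by
        refine (norm_sub_le _ _).trans (add_le_add_left ?_ _)
        exact (norm_sub_le _ _).trans (add_le_add_left (norm_sub_le _ _) _)
    _ ≤ ‖p - p'‖ + ‖q - q'‖ * ‖a‖ * ‖r‖ + ‖q'‖ * (‖a‖ * ‖b' - b‖ * ‖a'‖) * ‖r‖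
          + ‖q'‖ * ‖a'‖ * ‖r - r'‖ := by
        gcongr
        exacts [norm_mul₃_le, norm_mul₃_le.trans (by gcongr; exact norm_mul₃_le), norm_mul₃_le]
    _ = _ := by rw [norm_sub_rev b' b]; ring

namespace Matrix

variable {n 𝕜 : Type*} [RCLike 𝕜] [DecidableEq n]

theorem PosSemidef.posDef_add_smul_one {S : Matrix n n 𝕜} (hS : S.PosSemidef) {γ : ℝ}
    (hγ : 0 < γ) : (S + γ • (1 : Matrix n n 𝕜)).PosDef :=
  PosDef.posSemidef_add hS (PosDef.one.smul hγ)

variable [Fintype n]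

theorem norm_apply_self_le_l2_opNorm (A : Matrix n n 𝕜) (i : n) : ‖A i i‖ ≤ ‖A‖ := by
  have h := (toEuclideanCLM (𝕜 := 𝕜) A).le_opNorm (PiLp.single 2 i (1 : 𝕜))
  rw [PiLp.norm_single, norm_one, mul_one] at h
  refine le_trans ?_ ((PiLp.norm_apply_le _ i).trans h)
  simp [mulVec_single]

theorem norm_trace_le_card_mul_l2_opNorm (A : Matrix n n 𝕜) :
    ‖A.trace‖ ≤ Fintype.card n * ‖A‖ :=
  calc ‖A.trace‖ ≤ ∑ i, ‖A i i‖ := norm_sum_le _ _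
    _ ≤ ∑ _i : n, ‖A‖ := Finset.sum_le_sum fun i _ => norm_apply_self_le_l2_opNorm A i
    _ = Fintype.card n * ‖A‖ := by simp

theorem norm_trace_div_card_le_l2_opNorm (A : Matrix n n 𝕜) :
    ‖A.trace / Fintype.card n‖ ≤ ‖A‖ := by
  rcases (Fintype.card n).eq_zero_or_pos with h | h
  · simp [h]
  · rw [norm_div, RCLike.norm_natCast, div_le_iff₀ (by exact_mod_cast h), mul_comm]
    exact norm_trace_le_card_mul_l2_opNorm A

theorem PosSemidef.l2_opNorm_inv_add_smul_one_le {S : Matrix n n 𝕜} (hS : S.PosSemidef)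
    {γ : ℝ} (hγ : 0 < γ) : ‖(S + γ • (1 : Matrix n n 𝕜))⁻¹‖ ≤ γ⁻¹ := by
  set B := S + γ • (1 : Matrix n n 𝕜) with hB
  have hBB : B * B⁻¹ = 1 := mul_nonsing_inv B
    ((isUnit_iff_isUnit_det B).mp (hS.posDef_add_smul_one hγ).isUnit)
  refine (toEuclideanCLM (𝕜 := 𝕜) B⁻¹).opNorm_le_bound (by positivity) fun v => ?_
  set x := toEuclideanCLM (𝕜 := 𝕜) B⁻¹ v
  have hx : toEuclideanCLM (𝕜 := 𝕜) S x + (γ : 𝕜) • x = v := by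
    have h : toEuclideanCLM (𝕜 := 𝕜) B x = v := by
      change (toEuclideanCLM (𝕜 := 𝕜) B * toEuclideanCLM (𝕜 := 𝕜) B⁻¹) v = v
      rw [← map_mul, hBB, map_one]
      rfl
    rwa [hB, RCLike.real_smul_eq_coe_smul (K := 𝕜) γ, map_add, map_smul, map_one] at h
  have key := ContinuousLinearMap.IsPositive.mul_norm_le_norm_add_smul
    (T := toEuclideanCLM (𝕜 := 𝕜) S) (isPositive_toEuclideanLin_iff.mpr hS) γ x
  rw [hx] at key
  rw [inv_mul_eq_div, le_div_iff₀ hγ, mul_comm]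
  exact key

end Matrix

theorem abs_kcitStat_sub_le {n : ℕ} {γ C : ℝ} (hγ : 0 < γ)
    {P P' Q Q' R R' S S' : Matrix (Fin n) (Fin n) ℝ} (hS : S.PosSemidef) (hS' : S'.PosSemidef)
    (hQ' : ‖Q'‖ ≤ C) (hR : ‖R‖ ≤ C) :
    |kcitStat γ P Q S R - kcitStat γ P' Q' S' R'| ≤
      ‖P - P'‖ + C / γ * (‖Q - Q'‖ + ‖R - R'‖) + (C / γ) ^ 2 * ‖S - S'‖ := by
  have hC : 0 ≤ C := (norm_nonneg _).trans hR
  set A := (S + γ • (1 : Matrix (Fin n) (Fin n) ℝ))⁻¹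
  set A' := (S' + γ • (1 : Matrix (Fin n) (Fin n) ℝ))⁻¹
  have hAB : A * (S + γ • 1) = 1 := Matrix.nonsing_inv_mul _
    ((Matrix.isUnit_iff_isUnit_det _).mp (hS.posDef_add_smul_one hγ).isUnit)
  have hB'A' : (S' + γ • 1) * A' = 1 := Matrix.mul_nonsing_inv _
    ((Matrix.isUnit_iff_isUnit_det _).mp (hS'.posDef_add_smul_one hγ).isUnit)
  have hA : ‖A‖ ≤ γ⁻¹ := hS.l2_opNorm_inv_add_smul_one_le hγ
  have hA' : ‖A'‖ ≤ γ⁻¹ := hS'.l2_opNorm_inv_add_smul_one_le hγ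
  calc |kcitStat γ P Q S R - kcitStat γ P' Q' S' R'|
      = ‖((P - Q * A * R) - (P' - Q' * A' * R')).trace / Fintype.card (Fin n)‖ := by
        simp only [kcitStat, Matrix.trace_sub, Fintype.card_fin, Real.norm_eq_abs, A, A']
        ring_nf
    _ ≤ ‖(P - Q * A * R) - (P' - Q' * A' * R')‖ := Matrix.norm_trace_div_card_le_l2_opNorm _
    _ ≤ ‖P - P'‖ + ‖Q - Q'‖ * ‖A‖ * ‖R‖ + ‖Q'‖ * ‖A‖ * ‖S - S'‖ * ‖A'‖ * ‖R‖
          + ‖Q'‖ * ‖A'‖ * ‖R - R'‖ := by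
        simpa only [add_sub_add_right_eq_sub] using norm_sub_mul_mul_sub_sub_mul_mul_le hAB hB'A'
    _ ≤ ‖P - P'‖ + ‖Q - Q'‖ * γ⁻¹ * C + C * γ⁻¹ * ‖S - S'‖ * γ⁻¹ * C
          + C * γ⁻¹ * ‖R - R'‖ := by gcongr
    _ = _ := by ring

namespace MeasureTheory

variable {α ι E : Type*} {m : MeasurableSpace α} {μ : Measure α} {l : Filter ι}

theorem tendstoInMeasure_zero_iff_measure_lt_norm [SeminormedAddCommGroup E]
    {f : ι → α → E} :
    TendstoInMeasure μ f l 0 ↔ ∀ ε > 0, Tendsto (fun i => μ {x | ε < ‖f i x‖}) l (nhds 0) := by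
  simp only [tendstoInMeasure_iff_norm, Pi.zero_apply, sub_zero]
  refine ⟨fun h ε hε => ?_, fun h ε hε => ?_⟩
  · exact tendsto_nhds_bot_mono' (h ε hε) fun i =>
      measure_mono (Set.ofPred_subset_ofPred.2 fun x => le_of_lt)
  · exact tendsto_nhds_bot_mono' (h (ε / 2) (half_pos hε)) fun i =>
      measure_mono (Set.ofPred_subset_ofPred.2 fun x => (half_lt_self hε).trans_le)

theorem tendstoInMeasure_zero_iff_of_nonneg {f : ι → α → ℝ} (hf : ∀ i x, 0 ≤ f i x) :
    TendstoInMeasure μ f l 0 ↔ ∀ ε > 0, Tendsto (fun i => μ {x | ε < f i x}) l (nhds 0) := by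
  simp only [tendstoInMeasure_zero_iff_measure_lt_norm, Real.norm_of_nonneg (hf _ _)]

namespace TendstoInMeasure

theorem add [SeminormedAddCommGroup E] {f g : ι → α → E} (hf : TendstoInMeasure μ f l 0)
    (hg : TendstoInMeasure μ g l 0) : TendstoInMeasure μ (fun i x => f i x + g i x) l 0 := by
  rw [tendstoInMeasure_zero_iff_measure_lt_norm] at hf hg ⊢
  intro ε hε
  have hsum := (hf (ε / 2) (half_pos hε)).add (hg (ε / 2) (half_pos hε))
  rw [add_zero] at hsum
  refine tendsto_nhds_bot_mono' hsum fun i => (measure_mono fun x hx => ?_).trans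
    (measure_union_le _ _)
  by_contra hx'
  simp only [Set.mem_union, Set.mem_ofPred_eq, not_or, not_lt] at hx hx'
  linarith [norm_add_le (f i x) (g i x)]

theorem const_mul [SeminormedRing E] {f : ι → α → E} (hf : TendstoInMeasure μ f l 0) (c : E) :
    TendstoInMeasure μ (fun i x => c * f i x) l 0 := by
  rw [tendstoInMeasure_zero_iff_measure_lt_norm] at hf ⊢
  intro ε hε
  refine tendsto_nhds_bot_mono' (hf (ε / (‖c‖ + 1)) (by positivity))
    fun i => measure_mono fun x hx => ?_
  simp only [Set.mem_ofPred_eq] at hx ⊢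
  rw [div_lt_iff₀ (by positivity)]
  calc ε < ‖c * f i x‖ := hx
    _ ≤ ‖c‖ * ‖f i x‖ := norm_mul_le _ _
    _ ≤ ‖f i x‖ * (‖c‖ + 1) := by nlinarith [norm_nonneg (f i x)]

theorem of_ae_norm_le {F : Type*} [SeminormedAddCommGroup E] [SeminormedAddCommGroup F]
    {f : ι → α → E} {g : ι → α → F} (hg : TendstoInMeasure μ g l 0)
    (hfg : ∀ i, ∀ᵐ x ∂μ, ‖f i x‖ ≤ ‖g i x‖) : TendstoInMeasure μ f l 0 := by
  rw [tendstoInMeasure_zero_iff_measure_lt_norm] at hg ⊢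
  intro ε hε
  refine tendsto_nhds_bot_mono' (hg ε hε) fun i => measure_mono_ae ?_
  filter_upwards [hfg i] with x hx hεx
  exact hεx.trans_le hx

end TendstoInMeasure

end MeasureTheory

theorem kcit_op1_general {Ω : Type*} [MeasurableSpace Ω] (μ : Measure Ω)
    (γ : ℝ) (hγ : 0 < γ)
    (P P' Q Q' R R' S S' : (n : ℕ) → Ω → Matrix (Fin n) (Fin n) ℝ)
    (hS_psd : ∀ n, ∀ᵐ ω ∂μ, (S n ω).PosSemidef ∧ (S' n ω).PosSemidef)
    (C : ℝ)
    (hbdd : ∀ n, ∀ᵐ ω ∂μ,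
      opNorm (Q' n ω) ≤ C ∧ opNorm (R n ω) ≤ C ∧ opNorm (R' n ω) ≤ C)
    (hP : ∀ ε : ℝ, 0 < ε →
      Tendsto (fun n => μ {ω | opNorm (P n ω - P' n ω) > ε}) atTop (nhds 0))
    (hQ : ∀ ε : ℝ, 0 < ε →
      Tendsto (fun n => μ {ω | opNorm (Q n ω - Q' n ω) > ε}) atTop (nhds 0))
    (hR : ∀ ε : ℝ, 0 < ε →
      Tendsto (fun n => μ {ω | opNorm (R n ω - R' n ω) > ε}) atTop (nhds 0))
    (hS : ∀ ε : ℝ, 0 < ε →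
      Tendsto (fun n => μ {ω | opNorm (S n ω - S' n ω) > ε}) atTop (nhds 0)) :
    ∀ ε : ℝ, 0 < ε →
      Tendsto (fun n => μ {ω |
          |kcitStat γ (P n ω) (Q n ω) (S n ω) (R n ω)
            - kcitStat γ (P' n ω) (Q' n ω) (S' n ω) (R' n ω)| > ε}) atTop (nhds 0) := by
  have opNorm_sub {A A' : (n : ℕ) → Ω → Matrix (Fin n) (Fin n) ℝ}
      (h : ∀ ε : ℝ, 0 < ε →
        Tendsto (fun n => μ {ω | opNorm (A n ω - A' n ω) > ε}) atTop (nhds 0)) :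
      TendstoInMeasure μ (fun n ω => opNorm (A n ω - A' n ω)) atTop 0 :=
    (tendstoInMeasure_zero_iff_of_nonneg fun _ _ => norm_nonneg _).2 h
  have key : TendstoInMeasure μ (fun n ω => kcitStat γ (P n ω) (Q n ω) (S n ω) (R n ω)
      - kcitStat γ (P' n ω) (Q' n ω) (S' n ω) (R' n ω)) atTop 0 := by
    refine (((opNorm_sub hP).add (((opNorm_sub hQ).add (opNorm_sub hR)).const_mul (C / γ))).add
      ((opNorm_sub hS).const_mul ((C / γ) ^ 2))).of_ae_norm_le fun n => ?_
    filter_upwards [hS_psd n, hbdd n] with ω ⟨hSω, hS'ω⟩ ⟨hQ'ω, hRω, _⟩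
    exact (abs_kcitStat_sub_le hγ hSω hS'ω hQ'ω hRω).trans (le_abs_self _)
  exact tendstoInMeasure_zero_iff_measure_lt_norm.1 key

/-- Probabilistic form of the paper's Theorem 1: if the random matrices entering the KCIT
statistics are a.s. uniformly bounded where required, the `S` parts are a.s. symmetric
positive semidefinite, and each operator-norm difference is `o_p(1)`, then the difference
of the KCIT statistics is `o_p(1)`. -/
theorem kcit_op1 {Ω : Type*} [MeasurableSpace Ω] (μ : Measure Ω)
    [IsProbabilityMeasure μ] (γ : ℝ) (hγ : 0 < γ)
    (P P' Q Q' R R' S S' : (n : ℕ) → Ω → Matrix (Fin n) (Fin n) ℝ)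
    (hPmeas : ∀ n, Measurable (P n)) (hP'meas : ∀ n, Measurable (P' n))
    (hQmeas : ∀ n, Measurable (Q n)) (hQ'meas : ∀ n, Measurable (Q' n))
    (hRmeas : ∀ n, Measurable (R n)) (hR'meas : ∀ n, Measurable (R' n))
    (hSmeas : ∀ n, Measurable (S n)) (hS'meas : ∀ n, Measurable (S' n))
    (hS_psd : ∀ n, ∀ᵐ ω ∂μ, (S n ω).PosSemidef ∧ (S' n ω).PosSemidef)
    (C : ℝ)
    (hbdd : ∀ n, ∀ᵐ ω ∂μ,
      opNorm (Q' n ω) ≤ C ∧ opNorm (R n ω) ≤ C ∧ opNorm (R' n ω) ≤ C)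
    (hP : ∀ ε : ℝ, 0 < ε →
      Tendsto (fun n => μ {ω | opNorm (P n ω - P' n ω) > ε}) atTop (nhds 0))
    (hQ : ∀ ε : ℝ, 0 < ε →
      Tendsto (fun n => μ {ω | opNorm (Q n ω - Q' n ω) > ε}) atTop (nhds 0))
    (hR : ∀ ε : ℝ, 0 < ε →
      Tendsto (fun n => μ {ω | opNorm (R n ω - R' n ω) > ε}) atTop (nhds 0))
    (hS : ∀ ε : ℝ, 0 < ε →
      Tendsto (fun n => μ {ω | opNorm (S n ω - S' n ω) > ε}) atTop (nhds 0)) :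
    ∀ ε : ℝ, 0 < ε →
      Tendsto (fun n => μ {ω |
          |kcitStat γ (P n ω) (Q n ω) (S n ω) (R n ω)
            - kcitStat γ (P' n ω) (Q' n ω) (S' n ω) (R' n ω)| > ε}) atTop (nhds 0) :=
  kcit_op1_general μ γ hγ P P' Q Q' R R' S S' hS_psd C hbdd hP hQ hR hS
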